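/- arXiv:2309.08456 — 2 statements merged into one kernel-verified Lean document; each statement's English description precedes it below -/
import Mathlib

section
/- Let R be a Kähler curvature tensor on a complex inner product space V, and let C ≥ 0 be a constant such that |R(Z)| ≤ C‖Z‖⁴ for all Z ∈ V. Then for every pair of orthonormal vectors X, Y ∈ V, |2R(X,X̄,Y,Ȳ) − R(X,Ȳ,X,Ȳ) − R(Y,X̄,Y,X̄)| ≤ 13C. (This is the pointwise content of the theorem that a Kähler manifold whose holomorphic sectional curvature is bounded has bounded sectional curvature: the displayed quantity equals the sectional-curvature numerator R(u₁,u₂,u₂,u₁) of the underlying real curvature tensor for u₁ = X + X̄ and u₂ = Y + Ȳ.) -/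
/-!
Expanding `R(X + cY)` by multilinearity and averaging over `c = ±1` and `c = ±i` kills the terms
of odd degree in `Y` and separates `R(X,Ȳ,X,Ȳ) + R(Y,X̄,Y,X̄)` from `R(X,X̄,Y,Ȳ)`, which yields the
polarization identity
`2R(X,X̄,Y,Ȳ) − R(X,Ȳ,X,Ȳ) − R(Y,X̄,Y,X̄)
  = 3/8 (R(X+iY) + R(X−iY)) − 1/8 (R(X+Y) + R(X−Y)) − 1/2 (R(X) + R(Y))`.
For orthonormal `X, Y` and `|c| = 1` we have `‖X + cY‖⁴ = 4`, so the right-hand side is at most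
`3C + C + C = 5C`.
-/

open scoped ComplexConjugate

noncomputable section

/-- A Kähler curvature tensor on a complex inner product space `V`: a four-argument
function, whose value at `(X,Y,Z,W)` is written `R(X,Ȳ,Z,W̄)`, that is `ℂ`-linear in the
1st and 3rd arguments, conjugate-linear in the 2nd and 4th arguments, with the symmetries
`R(X,Ȳ,Z,W̄) = R(Z,Ȳ,X,W̄) = R(X,W̄,Z,Ȳ)` and `conj (R(X,Ȳ,Z,W̄)) = R(Y,X̄,W,Z̄)`. -/
structure KahlerCurvatureTensor (V : Type*) [NormedAddCommGroup V]
    [InnerProductSpace ℂ V] where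
  R : V → V → V → V → ℂ
  map_add₁ : ∀ X X' Y Z W, R (X + X') Y Z W = R X Y Z W + R X' Y Z W
  map_smul₁ : ∀ (c : ℂ) (X Y Z W), R (c • X) Y Z W = c * R X Y Z W
  map_add₂ : ∀ X Y Y' Z W, R X (Y + Y') Z W = R X Y Z W + R X Y' Z W
  map_smul₂ : ∀ (c : ℂ) (X Y Z W), R X (c • Y) Z W = conj c * R X Y Z W
  map_add₃ : ∀ X Y Z Z' W, R X Y (Z + Z') W = R X Y Z W + R X Y Z' W
  map_smul₃ : ∀ (c : ℂ) (X Y Z W), R X Y (c • Z) W = c * R X Y Z W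
  map_add₄ : ∀ X Y Z W W', R X Y Z (W + W') = R X Y Z W + R X Y Z W'
  map_smul₄ : ∀ (c : ℂ) (X Y Z W), R X Y Z (c • W) = conj c * R X Y Z W
  symm₁₃ : ∀ X Y Z W, R X Y Z W = R Z Y X W
  symm₂₄ : ∀ X Y Z W, R X Y Z W = R X W Z Y
  conj_symm : ∀ X Y Z W, conj (R X Y Z W) = R Y X W Z

/-- The abbreviation `R(Z) := R(Z,Z̄,Z,Z̄)`. -/
def KahlerCurvatureTensor.diag {V : Type*} [NormedAddCommGroup V] [InnerProductSpace ℂ V]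
    (R : KahlerCurvatureTensor V) (Z : V) : ℂ :=
  R.R Z Z Z Z

variable {V : Type*} [NormedAddCommGroup V] [InnerProductSpace ℂ V]

open Complex

namespace KahlerCurvatureTensor

variable (R : KahlerCurvatureTensor V)

lemma diag_add_smul (X Y : V) (c : ℂ) :
    R.diag (X + c • Y) =
      R.diag X + 2 * c * R.R Y X X X + 2 * conj c * R.R X Y X X
        + 4 * (c * conj c) * R.R X X Y Y + c ^ 2 * R.R Y X Y X
        + conj c ^ 2 * R.R X Y X Y + 2 * (c ^ 2 * conj c) * R.R Y Y Y X
        + 2 * (c * conj c ^ 2) * R.R X Y Y Y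
        + (c ^ 2 * conj c ^ 2) * R.diag Y := by
  have hYXXY : R.R Y X X Y = R.R X X Y Y := R.symm₁₃ Y X X Y
  have hXYYX : R.R X Y Y X = R.R X X Y Y := R.symm₂₄ X Y Y X
  have hYYXX : R.R Y Y X X = R.R X X Y Y := by rw [R.symm₁₃, hXYYX]
  simp only [diag, R.map_add₁, R.map_add₂, R.map_add₃, R.map_add₄,
    R.map_smul₁, R.map_smul₂, R.map_smul₃, R.map_smul₄]
  rw [R.symm₁₃ X X Y X, R.symm₂₄ X X X Y, R.symm₂₄ Y X Y Y, R.symm₁₃ Y Y X Y,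
    hYXXY, hXYYX, hYYXX]
  ring

lemma diag_add_add_diag_sub (X Y : V) :
    R.diag (X + Y) + R.diag (X - Y) =
      2 * (R.diag X + R.diag Y) + 8 * R.R X X Y Y + 2 * (R.R X Y X Y + R.R Y X Y X) := by
  rw [sub_eq_add_neg, ← one_smul ℂ Y, ← neg_smul, R.diag_add_smul, R.diag_add_smul]
  simp only [one_smul, map_one, map_neg]
  ring

lemma diag_add_I_smul_add_diag_sub_I_smul (X Y : V) :
    R.diag (X + I • Y) + R.diag (X - I • Y) =
      2 * (R.diag X + R.diag Y) + 8 * R.R X X Y Y - 2 * (R.R X Y X Y + R.R Y X Y X) := by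
  rw [sub_eq_add_neg, ← neg_smul, R.diag_add_smul, R.diag_add_smul]
  simp only [map_neg, conj_I]
  linear_combination (-8 * R.R X X Y Y + 2 * R.R X Y X Y + 2 * R.R Y X Y X
    + 2 * (I ^ 2 - 1) * R.diag Y) * I_sq

lemma sectional_polarization (X Y : V) :
    2 * R.R X X Y Y - R.R X Y X Y - R.R Y X Y X =
      3 / 8 * (R.diag (X + I • Y) + R.diag (X - I • Y))
        - 1 / 8 * (R.diag (X + Y) + R.diag (X - Y)) - 1 / 2 * (R.diag X + R.diag Y) := by
  rw [R.diag_add_I_smul_add_diag_sub_I_smul, R.diag_add_add_diag_sub]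
  ring

lemma norm_diag_add_le_of_orthonormal {C : ℝ} (hbound : ∀ Z : V, ‖R.diag Z‖ ≤ C * ‖Z‖ ^ 4)
    {X Y : V} (hX : ‖X‖ = 1) (hY : ‖Y‖ = 1) (hXY : inner ℂ X Y = 0) :
    ‖R.diag (X + Y)‖ ≤ 4 * C := by
  have hsq : ‖X + Y‖ ^ 2 = 2 := by
    rw [sq, norm_add_sq_eq_norm_sq_add_norm_sq_of_inner_eq_zero X Y hXY, hX, hY]
    norm_num
  calc ‖R.diag (X + Y)‖ ≤ C * (‖X + Y‖ ^ 2) ^ 2 := by rw [← pow_mul]; exact hbound _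
    _ = 4 * C := by rw [hsq]; ring

lemma norm_sectional_le {C : ℝ} (hbound : ∀ Z : V, ‖R.diag Z‖ ≤ C * ‖Z‖ ^ 4)
    {X Y : V} (hX : ‖X‖ = 1) (hY : ‖Y‖ = 1) (hXY : inner ℂ X Y = 0) :
    ‖2 * R.R X X Y Y - R.R X Y X Y - R.R Y X Y X‖ ≤ 5 * C := by
  have hdiag : ∀ c : ℂ, ‖c‖ = 1 → ‖R.diag (X + c • Y)‖ ≤ 4 * C := fun c hc =>
    R.norm_diag_add_le_of_orthonormal hbound hX (by rw [norm_smul, hc, hY, one_mul])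
      (by rw [inner_smul_right, hXY, mul_zero])
  have hI := hdiag I norm_I
  have hnegI := hdiag (-I) (by rw [norm_neg, norm_I])
  have hone := hdiag 1 norm_one
  have hnegone := hdiag (-1) (by rw [norm_neg, norm_one])
  rw [neg_smul, ← sub_eq_add_neg] at hnegI hnegone
  rw [one_smul] at hone hnegone
  have hXdiag : ‖R.diag X‖ ≤ C := by simpa [hX] using hbound X
  have hYdiag : ‖R.diag Y‖ ≤ C := by simpa [hY] using hbound Y
  rw [R.sectional_polarization]
  calc _ ≤ ‖(3 / 8 : ℂ)‖ * (‖R.diag (X + I • Y)‖ + ‖R.diag (X - I • Y)‖)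
          + ‖(1 / 8 : ℂ)‖ * (‖R.diag (X + Y)‖ + ‖R.diag (X - Y)‖)
          + ‖(1 / 2 : ℂ)‖ * (‖R.diag X‖ + ‖R.diag Y‖) := by
        refine (norm_sub_le _ _).trans (add_le_add ((norm_sub_le _ _).trans ?_) ?_) <;>
          simp only [norm_mul] <;> gcongr <;> exact norm_add_le _ _
    _ ≤ 3 / 8 * (4 * C + 4 * C) + 1 / 8 * (4 * C + 4 * C) + 1 / 2 * (C + C) := by
        norm_num only [norm_div, Complex.norm_ofNat, norm_one]
        gcongr
    _ = 5 * C := by ring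

end KahlerCurvatureTensor

theorem stmt6_general (R : KahlerCurvatureTensor V) (C : ℝ)
    (hbound : ∀ Z : V, ‖R.diag Z‖ ≤ C * ‖Z‖ ^ 4)
    (X Y : V) (hX : ‖X‖ = 1) (hY : ‖Y‖ = 1) (hXY : (inner ℂ X Y : ℂ) = 0) :
    ‖2 * R.R X X Y Y - R.R X Y X Y - R.R Y X Y X‖ ≤ 13 * C := by
  have hC : 0 ≤ C := by simpa [hX] using (norm_nonneg _).trans (hbound X)
  linarith [R.norm_sectional_le hbound hX hY hXY]

theorem stmt6 (R : KahlerCurvatureTensor V) (C : ℝ) (hC : 0 ≤ C)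
    (hbound : ∀ Z : V, ‖R.diag Z‖ ≤ C * ‖Z‖ ^ 4)
    (X Y : V) (hX : ‖X‖ = 1) (hY : ‖Y‖ = 1) (hXY : (inner ℂ X Y : ℂ) = 0) :
    ‖2 * R.R X X Y Y - R.R X Y X Y - R.R Y X Y X‖ ≤ 13 * C :=
  stmt6_general R C hbound X Y hX hY hXY

end
end

section
/- Let R be a Kähler curvature tensor on a complex inner product space V, and let C ≥ 0 be a constant such that |R(Z)| ≤ C‖Z‖⁴ for all Z ∈ V. Then for every pair of orthonormal vectors X, Y ∈ V, |R(X,X̄,Y,Ȳ)| ≤ (5/2)·C. -/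
/-!
Averaging `R(X + aY)` over the fourth roots of unity `a` kills every term of the multilinear
expansion except those in which `a` and `ā` occur equally often, which leaves
`4 R(X) + 4 R(Y) + 16 R(X,X̄,Y,Ȳ)`. For orthonormal `X, Y` each `‖X + aY‖⁴ = 4`, so
`16 |R(X,X̄,Y,Ȳ)| ≤ 4·4C + 4C + 4C`, i.e. even `|R(X,X̄,Y,Ȳ)| ≤ 3/2·C`.
-/

open scoped ComplexConjugate

noncomputable section

variable {V : Type*} [NormedAddCommGroup V] [InnerProductSpace ℂ V]

open Complex

theorem norm_add_smul_sq_of_inner_eq_zero {X Y : V} (hXY : inner ℂ X Y = 0) (c : ℂ) :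
    ‖X + c • Y‖ ^ 2 = ‖X‖ ^ 2 + ‖c‖ ^ 2 * ‖Y‖ ^ 2 := by
  rw [@norm_add_sq ℂ, inner_smul_right, hXY, norm_smul]
  simp only [mul_zero, map_zero, add_zero]
  ring

namespace KahlerCurvatureTensor

variable (R : KahlerCurvatureTensor V)

theorem diag_polarization (X Y : V) :
    R.diag (X + Y) + R.diag (X - Y) + R.diag (X + I • Y) + R.diag (X - I • Y)
      = 4 * R.diag X + 4 * R.diag Y + 16 * R.R X X Y Y := by
  have hYYXX : R.R Y Y X X = R.R X X Y Y := by rw [R.symm₁₃, R.symm₂₄]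
  have hYXXY : R.R Y X X Y = R.R X X Y Y := R.symm₁₃ ..
  have hXYYX : R.R X Y Y X = R.R X X Y Y := R.symm₂₄ ..
  simp only [diag, sub_eq_add_neg, ← neg_one_smul ℂ Y, ← neg_one_smul ℂ (I • Y), smul_smul,
    R.map_add₁, R.map_add₂, R.map_add₃, R.map_add₄, R.map_smul₁, R.map_smul₂, R.map_smul₃,
    R.map_smul₄, map_mul, map_neg, map_one, conj_I]
  rw [hYYXX, hYXXY, hXYYX]
  ring_nf
  simp only [I_sq, I_pow_four]
  ring

theorem norm_diag_add_smul_le {C : ℝ} (hbound : ∀ Z : V, ‖R.diag Z‖ ≤ C * ‖Z‖ ^ 4)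
    {X Y : V} (hX : ‖X‖ = 1) (hY : ‖Y‖ = 1) (hXY : inner ℂ X Y = 0) {c : ℂ} (hc : ‖c‖ = 1) :
    ‖R.diag (X + c • Y)‖ ≤ 4 * C := by
  have hsq : ‖X + c • Y‖ ^ 2 = 2 := by
    rw [norm_add_smul_sq_of_inner_eq_zero hXY, hX, hY, hc]
    norm_num
  calc ‖R.diag (X + c • Y)‖ ≤ C * (‖X + c • Y‖ ^ 2) ^ 2 := by rw [← pow_mul]; exact hbound _
    _ = 4 * C := by rw [hsq]; ring

theorem norm_bisectional_le {C : ℝ} (hbound : ∀ Z : V, ‖R.diag Z‖ ≤ C * ‖Z‖ ^ 4)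
    {X Y : V} (hX : ‖X‖ = 1) (hY : ‖Y‖ = 1) (hXY : inner ℂ X Y = 0) :
    ‖R.R X X Y Y‖ ≤ 3 / 2 * C := by
  have hroot {c : ℂ} (hc : ‖c‖ = 1) := R.norm_diag_add_smul_le hbound hX hY hXY hc
  have h₁ : ‖R.diag (X + Y)‖ ≤ 4 * C := by simpa using hroot (c := 1) (by simp)
  have h₂ : ‖R.diag (X - Y)‖ ≤ 4 * C := by
    simpa [← sub_eq_add_neg] using hroot (c := -1) (by simp)
  have h₃ : ‖R.diag (X + I • Y)‖ ≤ 4 * C := hroot (by simp)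
  have h₄ : ‖R.diag (X - I • Y)‖ ≤ 4 * C := by
    simpa [neg_smul, ← sub_eq_add_neg] using hroot (c := -I) (by simp)
  have hXX : ‖R.diag X‖ ≤ C := by simpa [hX] using hbound X
  have hYY : ‖R.diag Y‖ ≤ C := by simpa [hY] using hbound Y
  have h16 : 16 * ‖R.R X X Y Y‖ ≤ 24 * C := calc
    16 * ‖R.R X X Y Y‖ = ‖(R.diag (X + Y) + R.diag (X - Y) + R.diag (X + I • Y)
        + R.diag (X - I • Y)) - (4 * R.diag X + 4 * R.diag Y)‖ := by
      rw [R.diag_polarization, add_sub_cancel_left, norm_mul, norm_ofNat]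
    _ ≤ ‖R.diag (X + Y)‖ + ‖R.diag (X - Y)‖ + ‖R.diag (X + I • Y)‖ + ‖R.diag (X - I • Y)‖
        + 4 * ‖R.diag X‖ + 4 * ‖R.diag Y‖ := by
      refine (norm_sub_le _ _).trans ?_
      grw [norm_add₄_le, norm_add_le, norm_mul, norm_mul, norm_ofNat, add_assoc _ (4 * _)]
    _ ≤ 24 * C := by linarith
  linarith

end KahlerCurvatureTensor

theorem stmt16 (R : KahlerCurvatureTensor V) (C : ℝ) (hC : 0 ≤ C)
    (hbound : ∀ Z : V, ‖R.diag Z‖ ≤ C * ‖Z‖ ^ 4)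
    (X Y : V) (hX : ‖X‖ = 1) (hY : ‖Y‖ = 1) (hXY : (inner ℂ X Y : ℂ) = 0) :
    ‖R.R X X Y Y‖ ≤ 5 / 2 * C := by
  linarith [R.norm_bisectional_le hbound hX hY hXY]

end
end
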